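/- Let C_* and D_* be two complexes of k-vector spaces concentrated in non-positive degrees, each with homology concentrated in degree 0 (i.e. H_i(C) = H_i(D) = 0 for all i < 0). Form the tensor product complex C_* ⊗ D_* with (C ⊗ D)_n = ⊕_{k+l=n} C_k ⊗ D_l and differential ∂(x ⊗ y) = ∂x ⊗ y + (−1)^{|x|} x ⊗ ∂y. Let ρ ∈ C_* ⊗ D_* be an element of non-zero total degree, and let r ≤ −1. If ρ is closed up to degree r in D_*, i.e. ∂(ρ) ∈ ⊕_{l ≤ r} C_k ⊗ D_l, then ρ is exact up to degree r in D_*, i.e. there exists φ ∈ C_* ⊗ D_* with ρ − ∂(φ) ∈ ⊕_{l ≤ r} C_k ⊗ D_l. -/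

import Mathlib

set_option maxHeartbeats 1000000


open scoped TensorProduct

/-- A complex of `k`-vector spaces `X i`, `i ∈ ℤ`, with differential of degree `+1`,
concentrated in non-positive degrees and with homology concentrated in degree `0`
(i.e. exact in all negative degrees). -/
structure NonposComplex (k : Type) [Field k] (X : ℤ → Type)
    [∀ i, AddCommGroup (X i)] [∀ i, Module k (X i)] where
  /-- The differential, of degree `+1`. -/
  d : ∀ i, X i →ₗ[k] X (i + 1)
  d_sq : ∀ i (x : X i), d (i + 1) (d i x) = 0
  /-- The complex is concentrated in non-positive degrees. -/
  nonpos : ∀ i, 0 < i → ∀ x : X i, x = 0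
  /-- The homology is concentrated in degree `0`: the complex is exact in
  every negative degree. -/
  exact_neg : ∀ i, i + 1 < 0 → ∀ x : X (i + 1), d (i + 1) x = 0 → ∃ y : X i, d i y = x

/-- The degree-`n` piece `(C ⊗ D)_n = ⊕_{k+l=n} C_k ⊗ D_l` of the tensor
product complex. -/
abbrev TensorDeg (k : Type) [Field k] (CX DX : ℤ → Type)
    [∀ i, AddCommGroup (CX i)] [∀ i, Module k (CX i)]
    [∀ i, AddCommGroup (DX i)] [∀ i, Module k (DX i)] (n : ℤ) : Type :=
  DirectSum {p : ℤ × ℤ // p.1 + p.2 = n} (fun p => CX p.1.1 ⊗[k] DX p.1.2)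

/-- The differential `∂(x ⊗ y) = ∂x ⊗ y + (-1)^{|x|} x ⊗ ∂y` of the tensor
product complex. -/
noncomputable def tensorD (k : Type) [Field k] (CX DX : ℤ → Type)
    [∀ i, AddCommGroup (CX i)] [∀ i, Module k (CX i)]
    [∀ i, AddCommGroup (DX i)] [∀ i, Module k (DX i)]
    (C : NonposComplex k CX) (D : NonposComplex k DX) (n : ℤ) :
    TensorDeg k CX DX n →ₗ[k] TensorDeg k CX DX (n + 1) :=
  DirectSum.toModule k _ _ fun p =>
    ((DirectSum.lof k {q : ℤ × ℤ // q.1 + q.2 = n + 1}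
        (fun q => CX q.1.1 ⊗[k] DX q.1.2) ⟨(p.1.1 + 1, p.1.2), by have := p.2; omega⟩).comp
        (TensorProduct.map (C.d p.1.1) LinearMap.id))
      +
    ((DirectSum.lof k {q : ℤ × ℤ // q.1 + q.2 = n + 1}
        (fun q => CX q.1.1 ⊗[k] DX q.1.2) ⟨(p.1.1, p.1.2 + 1), by have := p.2; omega⟩).comp
        (((-1 : k) ^ p.1.1) • TensorProduct.map LinearMap.id (D.d p.1.2)))


open LinearMap in
lemma keyL (k : Type) [Field k] {A A' A'' B B' : Type}
    [AddCommGroup A] [Module k A] [AddCommGroup A'] [Module k A']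
    [AddCommGroup A''] [Module k A''] [AddCommGroup B] [Module k B]
    [AddCommGroup B'] [Module k B']
    (f : A' →ₗ[k] A) (g : A →ₗ[k] A'') (hfg : Function.Exact f g)
    (u : B' →ₗ[k] B) (x : A ⊗[k] B)
    (hx : rTensor B g x ∈ LinearMap.range (lTensor A'' u)) :
    ∃ (y : A' ⊗[k] B) (z : A ⊗[k] B'),
      x = rTensor B f y + lTensor A u z := by
  classical
  set Q : B →ₗ[k] B ⧸ LinearMap.range u := Submodule.mkQ _ with hQ
  have hQu : Q.comp u = 0 := by
    ext b; simp [hQ, Submodule.Quotient.mk_eq_zero]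
  have hcomm : ∀ (w : A ⊗[k] B), rTensor _ g (lTensor A Q w) = lTensor A'' Q (rTensor B g w) := by
    intro w
    have h1 := LinearMap.rTensor_comp_lTensor (R := k) (f := g) (g := Q)
    have h2 := LinearMap.lTensor_comp_rTensor (R := k) (f := g) (g := Q)
    rw [← LinearMap.comp_apply, h1, ← h2, LinearMap.comp_apply]
  obtain ⟨w, hw⟩ := hx
  have h0 : rTensor _ g (lTensor A Q x) = 0 := by
    rw [hcomm, ← hw, ← LinearMap.comp_apply, ← lTensor_comp, hQu]
    simp
  have hflat : Module.Flat k (B ⧸ LinearMap.range u) := inferInstance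
  have hex2 := Module.Flat.rTensor_exact (R := k) (B ⧸ LinearMap.range u) hfg
  obtain ⟨y', hy'⟩ := (hex2 _).mp h0
  obtain ⟨y, rfl⟩ := LinearMap.lTensor_surjective A' (Submodule.mkQ_surjective _) y'
  have hcomm2 : rTensor _ f (lTensor A' Q y) = lTensor A Q (rTensor B f y) := by
    have h1 := LinearMap.rTensor_comp_lTensor (R := k) (f := f) (g := Q)
    have h2 := LinearMap.lTensor_comp_rTensor (R := k) (f := f) (g := Q)
    rw [← LinearMap.comp_apply, h1, ← h2, LinearMap.comp_apply]
  have h3 : lTensor A Q (x - rTensor B f y) = 0 := by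
    rw [map_sub, ← hcomm2, hy', sub_self]
  have hexQ : Function.Exact u Q := LinearMap.exact_iff.mpr (Submodule.ker_mkQ _)
  have hex3 := Module.Flat.lTensor_exact (R := k) A hexQ
  obtain ⟨z, hz⟩ := (hex3 _).mp h3
  exact ⟨y, z, by rw [hz]; abel⟩

open LinearMap in
lemma keyR (k : Type) [Field k] {A A' B B' B'' : Type}
    [AddCommGroup A] [Module k A] [AddCommGroup A'] [Module k A']
    [AddCommGroup B] [Module k B] [AddCommGroup B'] [Module k B']
    [AddCommGroup B''] [Module k B'']
    (f : B' →ₗ[k] B) (g : B →ₗ[k] B'') (hfg : Function.Exact f g)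
    (u : A' →ₗ[k] A) (x : A ⊗[k] B)
    (hx : lTensor A g x ∈ LinearMap.range (rTensor B'' u)) :
    ∃ (y : A ⊗[k] B') (z : A' ⊗[k] B),
      x = lTensor A f y + rTensor B u z := by
  classical
  set Q : A →ₗ[k] A ⧸ LinearMap.range u := Submodule.mkQ _ with hQ
  have hQu : Q.comp u = 0 := by
    ext a; simp [hQ, Submodule.Quotient.mk_eq_zero]
  have hcomm : ∀ (w : A ⊗[k] B), lTensor _ g (rTensor B Q w) = rTensor B'' Q (lTensor A g w) := by
    intro w
    have h1 := LinearMap.lTensor_comp_rTensor (R := k) (f := Q) (g := g)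
    have h2 := LinearMap.rTensor_comp_lTensor (R := k) (f := Q) (g := g)
    rw [← LinearMap.comp_apply, h1, ← h2, LinearMap.comp_apply]
  obtain ⟨w, hw⟩ := hx
  have h0 : lTensor _ g (rTensor B Q x) = 0 := by
    rw [hcomm, ← hw, ← LinearMap.comp_apply, ← rTensor_comp, hQu]
    simp
  have hex2 := Module.Flat.lTensor_exact (R := k) (A ⧸ LinearMap.range u) hfg
  obtain ⟨y', hy'⟩ := (hex2 _).mp h0
  obtain ⟨y, rfl⟩ := LinearMap.rTensor_surjective B' (g := Q) (Submodule.mkQ_surjective _) y'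
  have hcomm2 : lTensor _ f (rTensor B' Q y) = rTensor B Q (lTensor A f y) := by
    have h1 := LinearMap.lTensor_comp_rTensor (R := k) (f := Q) (g := f)
    have h2 := LinearMap.rTensor_comp_lTensor (R := k) (f := Q) (g := f)
    rw [← LinearMap.comp_apply, h1, ← h2, LinearMap.comp_apply]
  have h3 : rTensor B Q (x - lTensor A f y) = 0 := by
    rw [map_sub, ← hcomm2, hy', sub_self]
  have hexQ : Function.Exact u Q := LinearMap.exact_iff.mpr (Submodule.ker_mkQ _)
  have hex3 := Module.Flat.rTensor_exact (R := k) B hexQ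
  obtain ⟨z, hz⟩ := (hex3 _).mp h3
  exact ⟨y, z, by rw [hz]; abel⟩

section Aux

variable (k : Type) [Field k] (CX DX : ℤ → Type)
  [∀ i, AddCommGroup (CX i)] [∀ i, Module k (CX i)]
  [∀ i, AddCommGroup (DX i)] [∀ i, Module k (DX i)]
  (C : NonposComplex k CX) (D : NonposComplex k DX)

include C D in
lemma triv (a b : ℤ) (h : 0 < a ∨ 0 < b) (x : CX a ⊗[k] DX b) : x = 0 := by
  rcases h with h | h
  · have hid : (LinearMap.id : CX a →ₗ[k] CX a) = 0 := by
      ext u; simpa using C.nonpos a h u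
    have hx : x = TensorProduct.map LinearMap.id LinearMap.id x := by
      rw [TensorProduct.map_id]; rfl
    rw [hx, hid]
    have hz : TensorProduct.map (0 : CX a →ₗ[k] CX a) (LinearMap.id : DX b →ₗ[k] DX b) = 0 := by
      apply TensorProduct.ext'
      intro u v; simp
    rw [hz]; rfl
  · have hid : (LinearMap.id : DX b →ₗ[k] DX b) = 0 := by
      ext u; simpa using D.nonpos b h u
    have hx : x = TensorProduct.map LinearMap.id LinearMap.id x := by
      rw [TensorProduct.map_id]; rfl
    rw [hx, hid]
    have hz : TensorProduct.map (LinearMap.id : CX a →ₗ[k] CX a) (0 : DX b →ₗ[k] DX b) = 0 := by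
      apply TensorProduct.ext'
      intro u v; simp
    rw [hz]; rfl

include C in
lemma exactC (e : ℤ) (he : e + 1 < 0) : Function.Exact (C.d e) (C.d (e+1)) := by
  intro x
  constructor
  · intro hx
    obtain ⟨y, hy⟩ := C.exact_neg e he x hx
    exact ⟨y, hy⟩
  · rintro ⟨y, rfl⟩
    exact C.d_sq e y

lemma of_same (M : ℤ) (p : ℤ × ℤ) (hp hp' : p.1 + p.2 = M)
    (t : CX p.1 ⊗[k] DX p.2) :
    (DirectSum.of (fun q : {q : ℤ × ℤ // q.1 + q.2 = M} => CX q.1.1 ⊗[k] DX q.1.2)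
      ⟨p, hp⟩ t) ⟨p, hp'⟩ = t :=
  DirectSum.of_eq_same _ _

lemma of_ne' (M : ℤ) (p1 p2 q1 q2 : ℤ) (hp : p1 + p2 = M) (hq : q1 + q2 = M)
    (hne : p1 ≠ q1 ∨ p2 ≠ q2)
    (t : CX p1 ⊗[k] DX p2) :
    (DirectSum.of (fun q : {q : ℤ × ℤ // q.1 + q.2 = M} => CX q.1.1 ⊗[k] DX q.1.2)
      ⟨(p1, p2), hp⟩ t) ⟨(q1, q2), hq⟩ = 0 :=
  DirectSum.of_eq_of_ne _ _ _ (by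
    simp only [ne_eq, Subtype.mk.injEq, Prod.mk.injEq, not_and]
    rcases hne with h | h
    · exact fun hc => absurd hc.symm h
    · exact fun _ hc => absurd hc.symm h)

lemma comp_apply (M : ℤ) (σ : TensorDeg k CX DX M) (a c : ℤ)
    (h : (a+1) + (c+1) = M + 1) (h1 : a + (c+1) = M) (h2 : (a+1) + c = M) :
    tensorD k CX DX C D M σ ⟨(a+1, c+1), h⟩ =
      TensorProduct.map (C.d a) LinearMap.id (σ ⟨(a, c+1), h1⟩)
      + (-1:k)^(a+1) • TensorProduct.map LinearMap.id (D.d c) (σ ⟨(a+1, c), h2⟩) := by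
  classical
  induction σ using DirectSum.induction_on with
  | zero => simp
  | add σ τ hσ hτ =>
    rw [map_add, DirectSum.add_apply, hσ, hτ, DirectSum.add_apply, DirectSum.add_apply,
      map_add, map_add, smul_add]
    abel
  | of i t =>
    obtain ⟨⟨xx, yy⟩, hxy⟩ := i
    rw [← DirectSum.lof_eq_of k, tensorD, DirectSum.toModule_lof]
    simp only [LinearMap.add_apply, LinearMap.comp_apply, LinearMap.smul_apply]
    rw [DirectSum.add_apply]
    simp only [DirectSum.lof_eq_of]
    by_cases hxa : xx = a
    · subst hxa
      have hyy : yy = c + 1 := by omega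
      subst hyy
      rw [of_same k CX DX (M+1) (xx+1, c+1)]
      rw [of_ne' k CX DX (M+1) xx (c+1+1) (xx+1) (c+1) _ _ (by omega)]
      rw [of_same k CX DX M (xx, c+1)]
      rw [of_ne' k CX DX M xx (c+1) (xx+1) c _ _ (by omega)]
      simp
    · by_cases hxa' : xx = a + 1
      · subst hxa'
        obtain rfl : c = yy := by omega
        rw [of_ne' k CX DX (M+1) (a+1+1) c (a+1) (c+1) _ _ (by omega)]
        rw [of_same k CX DX (M+1) (a+1, c+1)]
        rw [of_ne' k CX DX M (a+1) c a (c+1) _ _ (by omega)]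
        rw [of_same k CX DX M (a+1, c)]
        simp
      · rw [of_ne' k CX DX (M+1) (xx+1) yy (a+1) (c+1) _ _ (by omega)]
        rw [of_ne' k CX DX (M+1) xx (yy+1) (a+1) (c+1) _ _ (by omega)]
        rw [of_ne' k CX DX M xx yy a (c+1) _ _ (by omega)]
        rw [of_ne' k CX DX M xx yy (a+1) c _ _ (by omega)]
        simp


def reindex {M M' : ℤ} (h : M = M') :
    TensorDeg k CX DX M →ₗ[k] TensorDeg k CX DX M' := by
  subst h; exact LinearMap.id

lemma reindex_apply {M M' : ℤ} (h : M = M') (σ : TensorDeg k CX DX M)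
    (p : ℤ × ℤ) (h1 : p.1 + p.2 = M) (h2 : p.1 + p.2 = M') :
    reindex k CX DX h σ ⟨p, h2⟩ = σ ⟨p, h1⟩ := by
  subst h; rfl

lemma ddC (a β : ℤ) (w : CX a ⊗[k] DX β) :
    TensorProduct.map (C.d (a+1)) LinearMap.id
      (TensorProduct.map (C.d a) LinearMap.id w) = 0 := by
  induction w using TensorProduct.induction_on with
  | zero => simp
  | tmul u v => simp [C.d_sq a u]
  | add w₁ w₂ h₁ h₂ => rw [map_add, map_add, h₁, h₂, add_zero]

lemma ddD (b α : ℤ) (w : CX α ⊗[k] DX b) :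
    TensorProduct.map LinearMap.id (D.d (b+1))
      (TensorProduct.map LinearMap.id (D.d b) w) = 0 := by
  induction w using TensorProduct.induction_on with
  | zero => simp
  | tmul u v => simp [D.d_sq b v]
  | add w₁ w₂ h₁ h₂ => rw [map_add, map_add, h₁, h₂, add_zero]

lemma mapswap {A A' B B' : Type} [AddCommGroup A] [Module k A] [AddCommGroup A'] [Module k A']
    [AddCommGroup B] [Module k B] [AddCommGroup B'] [Module k B']
    (f : A →ₗ[k] A') (g : B →ₗ[k] B') (w : A ⊗[k] B) :
    TensorProduct.map f LinearMap.id (TensorProduct.map LinearMap.id g w)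
      = TensorProduct.map LinearMap.id g (TensorProduct.map f LinearMap.id w) := by
  induction w using TensorProduct.induction_on with
  | zero => simp
  | tmul u v => simp
  | add w₁ w₂ h₁ h₂ => rw [map_add, map_add, h₁, h₂, map_add, map_add]

lemma dsq_comp (M M' : ℤ) (hM : M + 1 = M') (σ : TensorDeg k CX DX M) (a c : ℤ)
    (h : (a+1) + (c+1) = M' + 1) :
    tensorD k CX DX C D M' (reindex k CX DX hM (tensorD k CX DX C D M σ)) ⟨(a+1, c+1), h⟩ = 0 := by
  subst hM
  obtain ⟨a', rfl⟩ : ∃ a', a = a' + 1 := ⟨a - 1, by ring⟩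
  obtain ⟨c', rfl⟩ : ∃ c', c = c' + 1 := ⟨c - 1, by ring⟩
  have hid : reindex k CX DX (rfl : M + 1 = M + 1) (tensorD k CX DX C D M σ)
      = tensorD k CX DX C D M σ := rfl
  rw [hid]
  rw [comp_apply k CX DX C D (M+1) _ (a'+1) (c'+1) h (by omega) (by omega)]
  rw [comp_apply k CX DX C D M σ a' (c'+1) (by omega) (by omega) (by omega)]
  rw [comp_apply k CX DX C D M σ (a'+1) c' (by omega) (by omega) (by omega)]
  rw [map_add, map_add, smul_add]
  rw [ddC k CX DX C]
  rw [map_smul]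
  rw [mapswap k]
  have hdd : TensorProduct.map LinearMap.id (D.d (c'+1))
      (TensorProduct.map LinearMap.id (D.d c') (σ ⟨(a'+1+1, c'), by omega⟩)) = 0 :=
    ddD k CX DX D c' _ _
  rw [map_smul, hdd, smul_zero, smul_zero, add_zero, zero_add, ← add_smul]
  have hs : ((-1:k)^(a'+1) + (-1:k)^(a'+1+1)) = 0 := by
    rw [zpow_add_one₀ (by norm_num : (-1:k) ≠ 0) (a'+1)]
    ring
  rw [hs, zero_smul]


include D in
lemma exactD (e : ℤ) (he : e + 1 < 0) : Function.Exact (D.d e) (D.d (e+1)) := by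
  intro x
  constructor
  · intro hx
    obtain ⟨y, hy⟩ := D.exact_neg e he x hx
    exact ⟨y, hy⟩
  · rintro ⟨y, rfl⟩
    exact D.d_sq e y

lemma psi_spec (n e c : ℤ) (he : e + 1 + (c + 1) = n)
    (y : CX e ⊗[k] DX (c+1)) (z : CX (e+1) ⊗[k] DX c) :
    ∃ ψ : TensorDeg k CX DX (n-1),
      (tensorD k CX DX C D (n-1) ψ ⟨(e+1, c+1), by omega⟩
        = TensorProduct.map (C.d e) LinearMap.id y
          + TensorProduct.map LinearMap.id (D.d c) z)
      ∧ (∀ (u v : ℤ) (huv : u + v = (n-1)+1), v < c →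
          tensorD k CX DX C D (n-1) ψ ⟨(u,v), huv⟩ = 0)
      ∧ (z = 0 → ∀ (u : ℤ) (hu : u + c = (n-1)+1),
          tensorD k CX DX C D (n-1) ψ ⟨(u,c), hu⟩ = 0) := by
  have hsne : ((-1:k)^(e+1)) ≠ 0 := zpow_ne_zero _ (by norm_num)
  refine ⟨DirectSum.of (fun p : {p : ℤ × ℤ // p.1 + p.2 = n-1} => CX p.1.1 ⊗[k] DX p.1.2)
        ⟨(e, c+1), by omega⟩ y
      + DirectSum.of (fun p : {p : ℤ × ℤ // p.1 + p.2 = n-1} => CX p.1.1 ⊗[k] DX p.1.2)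
        ⟨(e+1, c), by omega⟩ (((-1:k)^(e+1))⁻¹ • z), ?_, ?_, ?_⟩
  · rw [comp_apply k CX DX C D (n-1) _ e c (by omega) (by omega) (by omega)]
    rw [DirectSum.add_apply, DirectSum.add_apply]
    rw [of_same k CX DX (n-1) (e, c+1)]
    rw [of_ne' k CX DX (n-1) (e+1) c e (c+1) (by omega) (by omega) (by omega)]
    rw [of_ne' k CX DX (n-1) e (c+1) (e+1) c (by omega) (by omega) (by omega)]
    rw [of_same k CX DX (n-1) (e+1, c)]
    rw [add_zero, zero_add, map_smul, smul_smul, mul_inv_cancel₀ hsne, one_smul]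
  · intro u v huv hv
    obtain ⟨u', rfl⟩ : ∃ u', u = u' + 1 := ⟨u - 1, by ring⟩
    obtain ⟨v', rfl⟩ : ∃ v', v = v' + 1 := ⟨v - 1, by ring⟩
    rw [comp_apply k CX DX C D (n-1) _ u' v' huv (by omega) (by omega)]
    rw [DirectSum.add_apply, DirectSum.add_apply]
    rw [of_ne' k CX DX (n-1) e (c+1) u' (v'+1) (by omega) (by omega) (by omega)]
    rw [of_ne' k CX DX (n-1) (e+1) c u' (v'+1) (by omega) (by omega) (by omega)]
    rw [of_ne' k CX DX (n-1) e (c+1) (u'+1) v' (by omega) (by omega) (by omega)]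
    rw [of_ne' k CX DX (n-1) (e+1) c (u'+1) v' (by omega) (by omega) (by omega)]
    simp
  · rintro rfl u hu
    rw [smul_zero, map_zero, add_zero]
    obtain ⟨u', rfl⟩ : ∃ u', u = u' + 1 := ⟨u - 1, by ring⟩
    obtain ⟨c', rfl⟩ : ∃ c', c = c' + 1 := ⟨c - 1, by ring⟩
    rw [comp_apply k CX DX C D (n-1) _ u' c' hu (by omega) (by omega)]
    rw [of_ne' k CX DX (n-1) e (c'+1+1) u' (c'+1) (by omega) (by omega) (by omega)]
    rw [of_ne' k CX DX (n-1) e (c'+1+1) (u'+1) c' (by omega) (by omega) (by omega)]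
    simp


end Aux

section Aux
variable (k : Type) [Field k] (CX DX : ℤ → Type)
  [∀ i, AddCommGroup (CX i)] [∀ i, Module k (CX i)]
  [∀ i, AddCommGroup (DX i)] [∀ i, Module k (DX i)]
  (C : NonposComplex k CX) (D : NonposComplex k DX)

lemma step (n r : ℤ) (hn : n < 0) (hr : r ≤ -1) :
    ∀ (m : ℕ) (ρ : TensorDeg k CX DX n),
      (∀ q : {p : ℤ × ℤ // p.1 + p.2 = n + 1}, r < q.1.2 → tensorD k CX DX C D n ρ q = 0) →
      (∀ p : {p : ℤ × ℤ // p.1 + p.2 = n}, r < p.1.2 → p.1.2 < 1 - (m : ℤ) → ρ p = 0) →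
      ∃ φ : TensorDeg k CX DX (n - 1),
        ∀ p : {p : ℤ × ℤ // p.1 + p.2 = n}, r < p.1.2 →
          ρ p - tensorD k CX DX C D (n - 1) φ ⟨p.1, by have := p.2; linarith⟩ = 0 := by
  intro m
  induction m with
  | zero =>
    intro ρ h1 h2
    refine ⟨0, fun p hp => ?_⟩
    rw [map_zero, DirectSum.zero_apply, sub_zero]
    by_cases hp0 : p.1.2 ≤ 0
    · exact h2 p hp (by omega)
    · exact triv k CX DX C D p.1.1 p.1.2 (Or.inr (by omega)) _
  | succ m IH =>
    intro ρ h1 h2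
    by_cases hlev : -(m:ℤ) ≤ r
    · exact IH ρ h1 (fun p hp hp2 => h2 p hp (by omega))
    · obtain ⟨c, hc⟩ : ∃ c : ℤ, c + 1 = -(m:ℤ) := ⟨-(m:ℤ) - 1, by ring⟩
      obtain ⟨e, he⟩ : ∃ e : ℤ, e + 1 + (c + 1) = n := ⟨n - c - 2, by ring⟩
      have h1' : ∀ (u v : ℤ) (huv : u + v = n + 1), r < v →
          tensorD k CX DX C D n ρ ⟨(u, v), huv⟩ = 0 :=
        fun u v huv hv => h1 ⟨(u, v), huv⟩ hv
      have h2' : ∀ (u v : ℤ) (huv : u + v = n), r < v → v < -(m:ℤ) → ρ ⟨(u, v), huv⟩ = 0 :=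
        fun u v huv hv hv2 => h2 ⟨(u, v), huv⟩ hv (by push_cast; omega)
      have hmain : ∃ (y : CX e ⊗[k] DX (c+1)) (z : CX (e+1) ⊗[k] DX c),
          ρ ⟨(e+1, c+1), by omega⟩
            = TensorProduct.map (C.d e) LinearMap.id y
              + TensorProduct.map LinearMap.id (D.d c) z
          ∧ (z = 0 ∨ c ≤ r ∨ 0 < e + 2) := by
        rcases lt_trichotomy (e+1) 0 with hE | hE | hE
        · -- e + 1 < 0 : use C-exactness
          have heq := h1' (e+1+1) (c+1) (by omega) (by omega)
          rw [comp_apply k CX DX C D n ρ (e+1) c (by omega) (by omega) (by omega)] at heq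
          by_cases hcr : c ≤ r
          · -- bottom level: allow D-side correction
            have hA := eq_neg_of_add_eq_zero_left heq
            have hmem : LinearMap.rTensor (DX (c+1)) (C.d (e+1)) (ρ ⟨(e+1, c+1), by omega⟩)
                ∈ LinearMap.range (LinearMap.lTensor (CX (e+1+1)) (D.d c)) := by
              refine ⟨-((-1:k)^(e+1+1)) • ρ ⟨(e+1+1, c), by omega⟩, ?_⟩
              show TensorProduct.map LinearMap.id (D.d c) _
                = TensorProduct.map (C.d (e+1)) LinearMap.id _
              rw [map_smul, hA, neg_smul]
            obtain ⟨y, z, hyz⟩ := keyL k (C.d e) (C.d (e+1)) (exactC k CX C e hE)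
              (D.d c) (ρ ⟨(e+1, c+1), by omega⟩) hmem
            exact ⟨y, z, hyz, Or.inr (Or.inl hcr)⟩
          · -- cleared level below: pure C-exactness
            have hzero : ρ ⟨(e+1+1, c), by omega⟩ = 0 :=
              h2' (e+1+1) c (by omega) (by omega) (by omega)
            rw [hzero, map_zero, smul_zero, add_zero] at heq
            have hmem : LinearMap.rTensor (DX (c+1)) (C.d (e+1)) (ρ ⟨(e+1, c+1), by omega⟩)
                ∈ LinearMap.range (LinearMap.lTensor (CX (e+1+1)) (0 : DX c →ₗ[k] DX (c+1))) := by
              have hz : LinearMap.rTensor (DX (c+1)) (C.d (e+1)) (ρ ⟨(e+1, c+1), by omega⟩) = 0 := heq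
              rw [hz]
              exact Submodule.zero_mem _
            obtain ⟨y, z, hyz⟩ := keyL k (C.d e) (C.d (e+1)) (exactC k CX C e hE)
              (0 : DX c →ₗ[k] DX (c+1)) (ρ ⟨(e+1, c+1), by omega⟩) hmem
            refine ⟨y, 0, ?_, Or.inl rfl⟩
            rw [hyz, LinearMap.lTensor_zero]
            simp
            rfl
        · -- e + 1 = 0 : use D-exactness
          have heq := h1' (e+1) (c+1+1) (by omega) (by omega)
          rw [comp_apply k CX DX C D n ρ e (c+1) (by omega) (by omega) (by omega)] at heq
          have hB := eq_neg_of_add_eq_zero_right heq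
          have hmem : LinearMap.lTensor (CX (e+1)) (D.d (c+1)) (ρ ⟨(e+1, c+1), by omega⟩)
              ∈ LinearMap.range (LinearMap.rTensor (DX (c+1+1)) (C.d e)) := by
            refine ⟨((-1:k)^(e+1))⁻¹ • -(ρ ⟨(e, c+1+1), by omega⟩), ?_⟩
            show TensorProduct.map (C.d e) LinearMap.id _
              = TensorProduct.map LinearMap.id (D.d (c+1)) _
            rw [map_smul, map_neg]
            rw [inv_smul_eq_iff₀ (zpow_ne_zero _ (by norm_num : (-1:k) ≠ 0))]
            exact hB.symm
          obtain ⟨Y, Z, hYZ⟩ := keyR k (D.d c) (D.d (c+1))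
            (exactD k DX D c (by omega)) (C.d e) (ρ ⟨(e+1, c+1), by omega⟩) hmem
          refine ⟨Z, Y, ?_, Or.inr (Or.inr (by omega))⟩
          rw [hYZ]
          exact add_comm _ _
        · -- 0 < e + 1 : component is trivially zero
          refine ⟨0, 0, ?_, Or.inl rfl⟩
          rw [triv k CX DX C D (e+1) (c+1) (Or.inl hE) (ρ ⟨(e+1, c+1), by omega⟩)]
          simp
      obtain ⟨y, z, hyz, hz0⟩ := hmain
      obtain ⟨ψ, F1, F2, F3⟩ := psi_spec k CX DX C D n e c he y z
      -- corrected element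
      set ρ' : TensorDeg k CX DX n :=
        ρ - reindex k CX DX (by omega : (n-1)+1 = n) (tensorD k CX DX C D (n-1) ψ) with hρ'
      have hcomp : ∀ (u v : ℤ) (huv : u + v = n),
          ρ' ⟨(u,v), huv⟩ = ρ ⟨(u,v), huv⟩
            - tensorD k CX DX C D (n-1) ψ ⟨(u,v), by omega⟩ := by
        intro u v huv
        rw [hρ', DirectSum.sub_apply,
          reindex_apply k CX DX (by omega : (n-1)+1 = n) _ (u,v) (by omega) huv]
      have H1' : ∀ q : {p : ℤ × ℤ // p.1 + p.2 = n + 1}, r < q.1.2 →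
          tensorD k CX DX C D n ρ' q = 0 := by
        rintro ⟨⟨u, v⟩, huv⟩ hq
        obtain ⟨u', rfl⟩ : ∃ u', u = u' + 1 := ⟨u - 1, by ring⟩
        obtain ⟨v', rfl⟩ : ∃ v', v = v' + 1 := ⟨v - 1, by ring⟩
        rw [hρ', map_sub, DirectSum.sub_apply, h1 ⟨(u'+1, v'+1), huv⟩ hq,
          dsq_comp k CX DX C D (n-1) n (by omega) ψ u' v' huv, sub_zero]
      have H2' : ∀ p : {p : ℤ × ℤ // p.1 + p.2 = n}, r < p.1.2 →
          p.1.2 < 1 - (m : ℤ) → ρ' p = 0 := by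
        rintro ⟨⟨u, v⟩, huv⟩ hp hp2
        have huv' : u + v = n := huv
        have hp' : r < v := hp
        have hp2' : v < 1 - (m : ℤ) := hp2
        rw [hcomp u v huv]
        by_cases hvc : v = c + 1
        · subst hvc
          obtain rfl : u = e + 1 := by omega
          rw [F1, ← hyz]
          exact sub_self _
        · have hvle : v ≤ c := by omega
          rw [h2' u v huv' hp' (by omega)]
          by_cases hvc2 : v = c
          · subst hvc2
            rcases hz0 with rfl | hcr | hE2
            · rw [F3 rfl u (by omega)]
              exact sub_zero 0
            · omega
            · have h0 : tensorD k CX DX C D (n-1) ψ ⟨(u, v), by omega⟩ = 0 :=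
                triv k CX DX C D u v (Or.inl (by omega)) _
              rw [h0]
              exact sub_zero 0
          · rw [F2 u v (by omega) (by omega)]
            exact sub_zero 0
      obtain ⟨φ', hφ'⟩ := IH ρ' H1' H2'
      refine ⟨ψ + φ', ?_⟩
      rintro ⟨⟨u, v⟩, huv⟩ hp
      have hres := hφ' ⟨(u, v), huv⟩ hp
      rw [hcomp u v huv] at hres
      rw [map_add, DirectSum.add_apply, sub_add_eq_sub_sub]
      exact hres

end Aux

/-- Let `C_*` and `D_*` be complexes of `k`-vector spaces
concentrated in non-positive degrees, with homology concentrated in degree `0`.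
Let `ρ` be an element of the tensor product complex `C_* ⊗ D_*` of non-zero
total degree `n`, and let `r ≤ -1`.  If `ρ` is closed up to degree `r` in `D_*`
(i.e. `∂ρ ∈ ⊕_{l ≤ r} C_k ⊗ D_l`), then `ρ` is exact up to degree `r` in `D_*`:
there is a `φ` with `ρ - ∂φ ∈ ⊕_{l ≤ r} C_k ⊗ D_l`. -/
theorem tensor_closed_exact_up_to_degree (k : Type) [Field k] [CharZero k]
    (CX DX : ℤ → Type)
    [∀ i, AddCommGroup (CX i)] [∀ i, Module k (CX i)]
    [∀ i, AddCommGroup (DX i)] [∀ i, Module k (DX i)]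
    (C : NonposComplex k CX) (D : NonposComplex k DX)
    (n : ℤ) (hn : n ≠ 0) (r : ℤ) (hr : r ≤ -1)
    (ρ : TensorDeg k CX DX n)
    (hclosed : ∀ p : {p : ℤ × ℤ // p.1 + p.2 = n + 1}, r < p.1.2 →
      tensorD k CX DX C D n ρ p = 0) :
    ∃ φ : TensorDeg k CX DX (n - 1),
      ∀ p : {p : ℤ × ℤ // p.1 + p.2 = n}, r < p.1.2 →
        ρ p - tensorD k CX DX C D (n - 1) φ ⟨p.1, by have := p.2; omega⟩ = 0 := by
  rcases lt_or_gt_of_ne hn with hneg | hpos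
  · have hm : ((-r).toNat : ℤ) = -r := Int.toNat_of_nonneg (by omega)
    exact step k CX DX C D n r hneg hr (-r).toNat ρ hclosed
      (fun p hp hp2 => absurd hp (by omega))
  · refine ⟨0, fun p hp => ?_⟩
    rw [map_zero, DirectSum.zero_apply, sub_zero]
    have := p.2
    exact triv k CX DX C D p.1.1 p.1.2 (by omega) _
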